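/- A composition α is (i,z)-removable if and only if c_{i,J̃(i,z)}(α) = α_i − α_{J̃(i,z)} − z, where J̃(i,z) is the greatest j > i such that c_{i,j}(α) = c_{i,j}(α̃) and α̃ is obtained from α by replacing α_i with α_i − z. -/

import Mathlib

/-- The matrix `c_{i,j}(α)` defined recursively in `j`. -/
def cmat (α : ℕ → ℕ) (i : ℕ) : ℕ → ℕ
  | 0 => 0
  | j + 1 =>
    if j + 1 ≤ i + 1 then 0
    else cmat α i j + if α j < α i - cmat α i j then 1 else 0

/-- `α` covers `α'` in position `(i,j)`: conditions (a1)–(a4). -/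
def CoversAt (α α' : ℕ → ℕ) (i j : ℕ) : Prop :=
  1 ≤ i ∧ i < j ∧
  α' i + 1 ≤ α i ∧
  α' j + α' i + 1 = α j + α i ∧
  (∀ k, k ≠ i → k ≠ j → α' k = α k) ∧
  cmat α i j = cmat α' i j ∧
  cmat α i j + α j = α' i

/-- `α` is `(i,z)`-removable. -/
def IsRemovable (α : ℕ → ℕ) (i z : ℕ) : Prop :=
  ∃ α' j, CoversAt α α' i j ∧ α' i + z = α i

/-- `J̃(i,z)`: the greatest `j > i` such that `c_{i,j}(α) = c_{i,j}(α̃)`,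
where `α̃` is `α` with `α_i` replaced by `α_i - z`. -/
noncomputable def Jt (α : ℕ → ℕ) (i z : ℕ) : ℕ :=
  sSup {j | i < j ∧ cmat α i j = cmat (Function.update α i (α i - z)) i j}

/-!
Write `β` for `α` with `α_i` lowered by `z`. Inductively `c_{i,j}(β) ≤ c_{i,j}(α) ≤ c_{i,j}(β) + z`,
and once `c_{i,j}(β) < c_{i,j}(α)` the strict inequality persists for all larger `j`. Beyond the
support of `α` the entry `c_{i,j}(α)` climbs to `α_i > α_i - z`, so the `j > i` with
`c_{i,j}(α) = c_{i,j}(β)` form the interval `(i, J̃]`.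

A covering `α → α'` at `(i, j)` with `α'_i = α_i - z` forces `j` into this interval, since `α'`
and `β` agree strictly between `i` and `j`; and `c_{i,j}(α) + α_j + z = α_i` makes the two
matrices split at `j + 1`, so `j = J̃`. Conversely, if the identity holds at `J̃`, then moving
`z - 1` to position `J̃` in `β` gives a covering.
-/

open Function

section cmat

variable (α : ℕ → ℕ) (i : ℕ)

theorem cmat_of_le {j : ℕ} (h : j ≤ i + 1) : cmat α i j = 0 := by
  cases j with
  | zero => rfl
  | succ j => rw [cmat, if_pos h]

theorem cmat_succ_of_lt {j : ℕ} (h : i < j) :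
    cmat α i (j + 1) = cmat α i j + if α j < α i - cmat α i j then 1 else 0 := by
  rw [cmat, if_neg (by omega)]

theorem cmat_le (j : ℕ) : cmat α i j ≤ α i := by
  induction j with
  | zero => exact Nat.zero_le _
  | succ j ih =>
    rcases Nat.lt_or_ge i j with h | h
    · rw [cmat_succ_of_lt α i h]
      split_ifs <;> omega
    · rw [cmat_of_le α i (by omega)]
      exact Nat.zero_le _

theorem cmat_congr {β : ℕ → ℕ} (hi : α i = β i) {j : ℕ}
    (h : ∀ t, i < t → t < j → α t = β t) : cmat α i j = cmat β i j := by
  induction j with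
  | zero => rfl
  | succ j ih =>
    rcases Nat.lt_or_ge i j with hij | hij
    · rw [cmat_succ_of_lt α i hij, cmat_succ_of_lt β i hij,
        ih fun t ht₁ ht₂ => h t ht₁ (by omega), h j hij (by omega), hi]
    · rw [cmat_of_le α i (by omega), cmat_of_le β i (by omega)]

theorem min_le_cmat_of_support {m : ℕ} (hm : ∀ k, m < k → α k = 0) (him : i ≤ m) (t : ℕ) :
    min (α i) t ≤ cmat α i (m + 1 + t) := by
  induction t with
  | zero => omega
  | succ t ih =>
    have hle := cmat_le α i (m + 1 + t)
    rw [← Nat.add_assoc, cmat_succ_of_lt α i (by omega), hm (m + 1 + t) (by omega)]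
    split_ifs <;> omega

end cmat

section lowered

variable (α : ℕ → ℕ) (i z : ℕ)

theorem cmat_update_sub_le_and_le_add (j : ℕ) :
    cmat (update α i (α i - z)) i j ≤ cmat α i j ∧
      cmat α i j ≤ cmat (update α i (α i - z)) i j + z := by
  induction j with
  | zero => simp [cmat]
  | succ j ih =>
    rcases Nat.lt_or_ge i j with h | h
    · rw [cmat_succ_of_lt α i h, cmat_succ_of_lt _ i h, update_self,
        update_of_ne h.ne']
      split_ifs <;> omega
    · rw [cmat_of_le α i (by omega), cmat_of_le _ i (by omega)]
      omega

theorem cmat_update_sub_lt_of_le {j k : ℕ}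
    (hj : cmat (update α i (α i - z)) i j < cmat α i j) (hjk : j ≤ k) :
    cmat (update α i (α i - z)) i k < cmat α i k := by
  have hij : i < j := by
    by_contra! h
    rw [cmat_of_le α i (by omega), cmat_of_le _ i (by omega)] at hj
    exact hj.false
  induction k, hjk using Nat.le_induction with
  | base => exact hj
  | succ k hjk ih =>
    have hk := cmat_update_sub_le_and_le_add α i z k
    rw [cmat_succ_of_lt α i (by omega), cmat_succ_of_lt _ i (by omega), update_self,
      update_of_ne (by omega)]
    split_ifs <;> omega

theorem cmat_update_sub_lt_of_support {m : ℕ} (hm : ∀ k, m < k → α k = 0)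
    (hz : 0 < z) (hαi : 0 < α i) :
    cmat (update α i (α i - z)) i (m + 1 + α i) < cmat α i (m + 1 + α i) := by
  have him : i ≤ m := by
    by_contra h
    exact hαi.ne' (hm i (by omega))
  have hα := min_le_cmat_of_support α i hm him (α i)
  have hβ := cmat_le (update α i (α i - z)) i (m + 1 + α i)
  rw [update_self] at hβ
  omega

theorem cmat_update_sub_succ_lt {j : ℕ} (hij : i < j) (hz : 0 < z)
    (heq : cmat α i j = cmat (update α i (α i - z)) i j)
    (hj : cmat α i j + α j + z = α i) :
    cmat (update α i (α i - z)) i (j + 1) < cmat α i (j + 1) := by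
  rw [cmat_succ_of_lt α i hij, cmat_succ_of_lt _ i hij, update_self, update_of_ne hij.ne']
  split_ifs <;> omega

theorem cmat_eq_cmat_update_sub_iff_le_Jt (hbd : ∃ m, ∀ k, m < k → α k = 0)
    (hz : 0 < z) (hαi : 0 < α i) {j : ℕ} (hij : i < j) :
    cmat α i j = cmat (update α i (α i - z)) i j ↔ j ≤ Jt α i z := by
  obtain ⟨m, hm⟩ := hbd
  set S := {j | i < j ∧ cmat α i j = cmat (update α i (α i - z)) i j}
  have hbdd : BddAbove S := by
    refine ⟨m + α i, fun k ⟨hik, hk⟩ => ?_⟩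
    by_contra! hlt
    have hsupp := cmat_update_sub_lt_of_support α i z hm hz hαi
    exact (cmat_update_sub_lt_of_le α i z hsupp (by omega)).ne' hk
  have hJ : Jt α i z ∈ S :=
    Nat.sSup_mem ⟨i + 1, Nat.lt_succ_self i, by rw [cmat_of_le _ i le_rfl, cmat_of_le _ i le_rfl]⟩
      hbdd
  refine ⟨fun h => le_csSup hbdd ⟨hij, h⟩, fun hjJ => ?_⟩
  by_contra hne
  have hlt := lt_of_le_of_ne (cmat_update_sub_le_and_le_add α i z j).1 (Ne.symm hne)
  exact (cmat_update_sub_lt_of_le α i z hlt hjJ).ne' hJ.2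

end lowered

/-- `α` is `(i,z)`-removable iff
`c_{i,J̃(i,z)}(α) = α_i - α_{J̃(i,z)} - z` (stated additively in `ℕ`). -/
theorem removable_iff (α : ℕ → ℕ) (hbd : ∃ m, ∀ k, m < k → α k = 0)
    (i z : ℕ) (hi : 1 ≤ i) (hz1 : 1 ≤ z) (hz2 : z ≤ α i) :
    IsRemovable α i z ↔
      cmat α i (Jt α i z) + α (Jt α i z) + z = α i := by
  have hagree := @cmat_eq_cmat_update_sub_iff_le_Jt α i z hbd hz1 (by omega)
  have hJ : i < Jt α i z :=
    (hagree (Nat.lt_succ_self i)).1 (by rw [cmat_of_le _ i le_rfl, cmat_of_le _ i le_rfl])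
  constructor
  · rintro ⟨α', j, ⟨-, hij, -, -, hα', hcov, hcj⟩, hzα'⟩
    have hβ : cmat α' i j = cmat (update α i (α i - z)) i j :=
      cmat_congr α' i (by rw [update_self]; omega)
        fun t hit htj => by rw [hα' t hit.ne' htj.ne, update_of_ne hit.ne']
    have hjJ : j ≤ Jt α i z := (hagree hij).1 (hcov.trans hβ)
    have hsplit := cmat_update_sub_succ_lt α i z hij hz1 (hcov.trans hβ) (by omega)
    obtain rfl : j = Jt α i z := by
      by_contra hne
      exact hsplit.ne' ((hagree (by omega)).2 (by omega))
    omega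
  · intro h
    set J := Jt α i z
    set α' := update (update α i (α i - z)) J (α J + z - 1)
    have hα'i : α' i = α i - z := by simp [α', update_of_ne hJ.ne]
    have hα'J : α' J = α J + z - 1 := update_self _ _ _
    have hα'k : ∀ k, k ≠ i → k ≠ J → α' k = α k := fun k hki hkJ => by
      simp only [α', update_of_ne hkJ, update_of_ne hki]
    have hcmat : cmat α i J = cmat α' i J := by
      rw [(hagree hJ).2 le_rfl]
      exact cmat_congr _ i (by rw [hα'i, update_self])
        fun t _ htJ => by simp only [α', update_of_ne htJ.ne]
    exact ⟨α', J, ⟨hi, hJ, by omega, by omega, hα'k, hcmat, by omega⟩, by omega⟩
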